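/- arXiv:2502.12399 — 6 statements merged into one kernel-verified Lean document; each statement's English description precedes it below -/
import Mathlib

section
/- If B > 0 and p > 0 satisfy Q_m ≤ p/B ≤ Q_M, then 0 ≤ 1 − Q_m·B/p ≤ (Q_M − Q_m)/Q_M, and consequently the cyanobacteria reaction term satisfies r·(1 − Q_m·B/p)·h(B)·B − l·B − (D/z_m)·B ≤ f(B), where f(B) = ( r·((Q_M − Q_m)/Q_M)·ln((H + I_in)/H)/(z_m·(k·B + K_bg)) − l − D/z_m )·B. -/
/-- Light intensity at depth `s` with biomass `B`:  `I(s,B) = I_in · exp(−(K_bg + k·B)·s)`. -/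
noncomputable def lightI (I_in K_bg k : ℝ) (s B : ℝ) : ℝ :=
  I_in * Real.exp (-((K_bg + k * B) * s))

/-- Light-limited growth factor
`h(B) = ln((H + I_in)/(H + I(z_m,B)))/(z_m·(k·B + K_bg))`. -/
noncomputable def hfun (z_m k K_bg H I_in : ℝ) (B : ℝ) : ℝ :=
  Real.log ((H + I_in) / (H + lightI I_in K_bg k z_m B)) / (z_m * (k * B + K_bg))

/-- The comparison function
`f(B) = ( r·((Q_M−Q_m)/Q_M)·ln((H+I_in)/H)/(z_m·(k·B+K_bg)) − l − D/z_m )·B`. -/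
noncomputable def ffun (r Q_m Q_M z_m k K_bg H I_in l D : ℝ) (B : ℝ) : ℝ :=
  (r * ((Q_M - Q_m) / Q_M) * Real.log ((H + I_in) / H) / (z_m * (k * B + K_bg))
    - l - D / z_m) * B

/-- if `B > 0`, `p > 0` and `Q_m ≤ p/B ≤ Q_M`, then
`0 ≤ 1 − Q_m·B/p ≤ (Q_M − Q_m)/Q_M` and the cyanobacteria reaction term is
bounded above by `f(B)`. -/
theorem reaction_term_bounded_by_f
    (r Q_m Q_M z_m k K_bg H I_in l D ρ_m M P_h : ℝ)
    (hr : 0 < r) (hQm : 0 < Q_m) (hQM : 0 < Q_M) (hzm : 0 < z_m) (hk : 0 < k)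
    (hKbg : 0 < K_bg) (hH : 0 < H) (hIin : 0 < I_in) (hl : 0 < l) (hD : 0 < D)
    (hρm : 0 < ρ_m) (hM : 0 < M) (hQmM : Q_m < Q_M) (hPh : 0 ≤ P_h)
    (B p : ℝ) (hB : 0 < B) (hp : 0 < p)
    (hq1 : Q_m ≤ p / B) (hq2 : p / B ≤ Q_M) :
    (0 ≤ 1 - Q_m * B / p ∧ 1 - Q_m * B / p ≤ (Q_M - Q_m) / Q_M) ∧
      r * (1 - Q_m * B / p) * hfun z_m k K_bg H I_in B * B - l * B - (D / z_m) * B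
        ≤ ffun r Q_m Q_M z_m k K_bg H I_in l D B := by
  have hden : 0 < z_m * (k * B + K_bg) := by positivity
  -- quota bounds
  have hQmB : Q_m * B ≤ p := (le_div_iff₀ hB).mp hq1
  have hc0 : 0 ≤ 1 - Q_m * B / p := by
    have : Q_m * B / p ≤ 1 := (div_le_one hp).mpr hQmB
    linarith
  have hpB : p ≤ Q_M * B := by nlinarith [(div_le_iff₀ hB).mp hq2]
  have hfrac : Q_m / Q_M ≤ Q_m * B / p := by
    rw [div_le_div_iff₀ hQM hp]
    nlinarith
  have hc1 : 1 - Q_m * B / p ≤ (Q_M - Q_m) / Q_M := by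
    have h1 : (Q_M - Q_m) / Q_M = 1 - Q_m / Q_M := by field_simp
    rw [h1]; linarith
  refine ⟨⟨hc0, hc1⟩, ?_⟩
  -- bound on hfun
  set L := Real.log ((H + I_in) / H) with hLdef
  have hlightpos : 0 < lightI I_in K_bg k z_m B := by
    unfold lightI; positivity
  have hlightle : lightI I_in K_bg k z_m B ≤ I_in := by
    unfold lightI
    have : Real.exp (-((K_bg + k * B) * z_m)) ≤ 1 := by
      apply Real.exp_le_one_iff.mpr
      nlinarith
    nlinarith
  have hlog0 : 0 ≤ Real.log ((H + I_in) / (H + lightI I_in K_bg k z_m B)) := by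
    apply Real.log_nonneg
    rw [le_div_iff₀ (by linarith)]
    linarith
  have hlogle : Real.log ((H + I_in) / (H + lightI I_in K_bg k z_m B)) ≤ L := by
    apply Real.log_le_log (by positivity)
    apply div_le_div_of_nonneg_left (by linarith) hH (by linarith)
  have hL0 : 0 ≤ L := le_trans hlog0 hlogle
  have hh0 : 0 ≤ hfun z_m k K_bg H I_in B := div_nonneg hlog0 hden.le
  have hhle : hfun z_m k K_bg H I_in B ≤ L / (z_m * (k * B + K_bg)) := by
    unfold hfun; gcongr
  -- main bound
  have key : r * (1 - Q_m * B / p) * hfun z_m k K_bg H I_in B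
      ≤ r * ((Q_M - Q_m) / Q_M) * (L / (z_m * (k * B + K_bg))) := by
    have h1 : r * (1 - Q_m * B / p) ≤ r * ((Q_M - Q_m) / Q_M) :=
      mul_le_mul_of_nonneg_left hc1 hr.le
    have h2 : 0 ≤ L / (z_m * (k * B + K_bg)) := div_nonneg hL0 hden.le
    calc r * (1 - Q_m * B / p) * hfun z_m k K_bg H I_in B
        ≤ r * (1 - Q_m * B / p) * (L / (z_m * (k * B + K_bg))) :=
          mul_le_mul_of_nonneg_left hhle (by positivity)
      _ ≤ r * ((Q_M - Q_m) / Q_M) * (L / (z_m * (k * B + K_bg))) :=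
          mul_le_mul_of_nonneg_right h1 h2
  unfold ffun
  rw [← hLdef]
  nlinarith [mul_le_mul_of_nonneg_right key hB.le,
    mul_div_assoc (r * ((Q_M - Q_m) / Q_M)) L (z_m * (k * B + K_bg))]
end

section
/- Define B̄ = (1/k)·( (r/(z_m·l + D))·((Q_M − Q_m)/Q_M)·ln((H + I_in)/H) − K_bg ) and f(B) = ( r·((Q_M − Q_m)/Q_M)·ln((H + I_in)/H)/(z_m·(k·B + K_bg)) − l − D/z_m )·B. Then k·B̄ + K_bg > 0 and f(B̄) = 0; moreover f(B) ≤ 0 for every B ≥ max(B̄, 0), and if B̄ < 0 then f(B) < 0 for every B > 0. -/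
/-- The explicit root
`B̄ = (1/k)·( (r/(z_m·l + D))·((Q_M − Q_m)/Q_M)·ln((H + I_in)/H) − K_bg )`. -/
noncomputable def Bbar (r Q_m Q_M z_m k K_bg H I_in l D : ℝ) : ℝ :=
  (1 / k) * ((r / (z_m * l + D)) * ((Q_M - Q_m) / Q_M) * Real.log ((H + I_in) / H)
    - K_bg)

/-- `k·B̄ + K_bg > 0`, `f(B̄) = 0`, `f(B) ≤ 0` for `B ≥ max(B̄,0)`, and
if `B̄ < 0` then `f(B) < 0` for every `B > 0`. -/
theorem Bbar_root_and_sign_of_f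
    (r Q_m Q_M z_m k K_bg H I_in l D ρ_m M P_h : ℝ)
    (hr : 0 < r) (hQm : 0 < Q_m) (hQM : 0 < Q_M) (hzm : 0 < z_m) (hk : 0 < k)
    (hKbg : 0 < K_bg) (hH : 0 < H) (hIin : 0 < I_in) (hl : 0 < l) (hD : 0 < D)
    (hρm : 0 < ρ_m) (hM : 0 < M) (hQmM : Q_m < Q_M) (hPh : 0 ≤ P_h) :
    (0 < k * Bbar r Q_m Q_M z_m k K_bg H I_in l D + K_bg) ∧
    (ffun r Q_m Q_M z_m k K_bg H I_in l D (Bbar r Q_m Q_M z_m k K_bg H I_in l D) = 0) ∧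
    (∀ B ≥ max (Bbar r Q_m Q_M z_m k K_bg H I_in l D) 0,
      ffun r Q_m Q_M z_m k K_bg H I_in l D B ≤ 0) ∧
    (Bbar r Q_m Q_M z_m k K_bg H I_in l D < 0 →
      ∀ B > (0:ℝ), ffun r Q_m Q_M z_m k K_bg H I_in l D B < 0) := by
  set L := Real.log ((H + I_in) / H) with hLdef
  have hLpos : 0 < L := Real.log_pos (by rw [lt_div_iff₀ hH]; linarith)
  set A := r * ((Q_M - Q_m) / Q_M) * L with hAdef
  have hA : 0 < A :=
    mul_pos (mul_pos hr (div_pos (by linarith) hQM)) hLpos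
  have hden : 0 < z_m * l + D := by positivity
  have hEq : k * Bbar r Q_m Q_M z_m k K_bg H I_in l D + K_bg = A / (z_m * l + D) := by
    unfold Bbar
    rw [hAdef, hLdef]
    field_simp
    ring
  have h1 : 0 < k * Bbar r Q_m Q_M z_m k K_bg H I_in l D + K_bg := by
    rw [hEq]; exact div_pos hA hden
  refine ⟨h1, ?_, ?_, ?_⟩
  · unfold ffun
    rw [show k * Bbar r Q_m Q_M z_m k K_bg H I_in l D + K_bg = A / (z_m * l + D) from hEq,
      ← hAdef]
    have : A / (z_m * (A / (z_m * l + D))) - l - D / z_m = 0 := by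
      field_simp
      ring
    rw [this, zero_mul]
  · intro B hB
    have hBb : Bbar r Q_m Q_M z_m k K_bg H I_in l D ≤ B := le_trans (le_max_left _ _) hB
    have hB0 : 0 ≤ B := le_trans (le_max_right _ _) hB
    have hpos : 0 < k * B + K_bg := by nlinarith
    have hge : A / (z_m * l + D) ≤ k * B + K_bg := by
      rw [← hEq]; nlinarith
    have hbr : A / (z_m * (k * B + K_bg)) - l - D / z_m ≤ 0 := by
      have h2 : A / (z_m * (k * B + K_bg)) ≤ l + D / z_m := by
        rw [div_le_iff₀ (by positivity)]
        have : A ≤ (z_m * l + D) * (k * B + K_bg) := by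
          calc A = (z_m * l + D) * (A / (z_m * l + D)) := by field_simp
            _ ≤ (z_m * l + D) * (k * B + K_bg) := by
                exact mul_le_mul_of_nonneg_left hge (le_of_lt hden)
        have hid : (l + D / z_m) * (z_m * (k * B + K_bg))
            = (z_m * l + D) * (k * B + K_bg) := by field_simp
        linarith [this]
      linarith
    unfold ffun
    rw [← hAdef]
    exact mul_nonpos_of_nonpos_of_nonneg hbr hB0
  · intro hneg B hBpos
    have hlt : A / (z_m * l + D) < k * B + K_bg := by
      rw [← hEq]; nlinarith
    have hbr : A / (z_m * (k * B + K_bg)) - l - D / z_m < 0 := by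
      have h2 : A / (z_m * (k * B + K_bg)) < l + D / z_m := by
        rw [div_lt_iff₀ (by positivity)]
        have : A < (z_m * l + D) * (k * B + K_bg) := by
          calc A = (z_m * l + D) * (A / (z_m * l + D)) := by field_simp
            _ < (z_m * l + D) * (k * B + K_bg) := by
                exact mul_lt_mul_of_pos_left hlt hden
        have hid : (l + D / z_m) * (z_m * (k * B + K_bg))
            = (z_m * l + D) * (k * B + K_bg) := by field_simp
        linarith [this]
      linarith
    unfold ffun
    rw [← hAdef]
    exact mul_neg_of_neg_of_pos hbr hBpos
end

section
/- (Quota invariance, Lemma 3.1, one-dimensional case.) If (B, p, P) is a positive classical solution of the one-dimensional system on [0,L]×[0,T] whose initial data satisfy Q_m ≤ p(x,0)/B(x,0) ≤ Q_M for every x ∈ [0,L], then Q_m·B(x,t) ≤ p(x,t) ≤ Q_M·B(x,t) for every (x,t) ∈ [0,L]×[0,T]. -/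
open Set

/-- Uptake function `η(B,p,P) = ρ_m·((Q_M·B − p)/(Q_M − Q_m))·(P/(P + M))`. -/
noncomputable def etafun (ρ_m Q_m Q_M M : ℝ) (B p P : ℝ) : ℝ :=
  ρ_m * ((Q_M * B - p) / (Q_M - Q_m)) * (P / (P + M))

/-- Partial derivative in time (`t` is the second argument). -/
noncomputable def pt (f : ℝ → ℝ → ℝ) (x t : ℝ) : ℝ := deriv (fun τ => f x τ) t

/-- Partial derivative in space (`x` is the first argument). -/
noncomputable def px (f : ℝ → ℝ → ℝ) (x t : ℝ) : ℝ := deriv (fun y => f y t) x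

/-- Second partial derivative in space. -/
noncomputable def pxx (f : ℝ → ℝ → ℝ) (x t : ℝ) : ℝ := deriv (fun y => px f y t) x

/-- The regularity required of each component of a classical solution on
`[0,L]×[0,T]`: continuity on `[0,L]×[0,T]`, existence of the partial derivatives
`∂_t`, `∂_x`, `∂_xx` on `[0,L]×(0,T]`, and their continuity there. -/
def ClassReg (L T : ℝ) (f : ℝ → ℝ → ℝ) : Prop :=
  ContinuousOn (fun q : ℝ × ℝ => f q.1 q.2) (Icc 0 L ×ˢ Icc 0 T) ∧
  (∀ x ∈ Icc (0:ℝ) L, ∀ t ∈ Ioc (0:ℝ) T,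
    DifferentiableAt ℝ (fun τ => f x τ) t ∧
    DifferentiableAt ℝ (fun y => f y t) x ∧
    DifferentiableAt ℝ (fun y => px f y t) x) ∧
  ContinuousOn (fun q : ℝ × ℝ => pt f q.1 q.2) (Icc 0 L ×ˢ Ioc 0 T) ∧
  ContinuousOn (fun q : ℝ × ℝ => px f q.1 q.2) (Icc 0 L ×ˢ Ioc 0 T) ∧
  ContinuousOn (fun q : ℝ × ℝ => pxx f q.1 q.2) (Icc 0 L ×ˢ Ioc 0 T)

/-- A positive classical solution of the one-dimensional
reaction–diffusion–advection system on `[0,L]×[0,T]`. -/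
def IsPosClassicalSol
    (α β β_B β_P r Q_m Q_M z_m k K_bg H I_in l D ρ_m M P_h : ℝ)
    (v : ℝ → ℝ) (L T : ℝ) (B p P : ℝ → ℝ → ℝ) : Prop :=
  -- regularity
  ClassReg L T B ∧ ClassReg L T p ∧ ClassReg L T P ∧
  -- strict positivity on [0,L]×[0,T]
  (∀ x ∈ Icc (0:ℝ) L, ∀ t ∈ Icc (0:ℝ) T,
    0 < B x t ∧ 0 < p x t ∧ 0 < P x t) ∧
  -- the three PDEs on [0,L]×(0,T]
  (∀ x ∈ Icc (0:ℝ) L, ∀ t ∈ Ioc (0:ℝ) T,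
    pt B x t = α * pxx B x t - β_B * v t * px B x t
      + r * (1 - Q_m * B x t / p x t) * hfun z_m k K_bg H I_in (B x t) * B x t
      - l * B x t - (D / z_m) * B x t) ∧
  (∀ x ∈ Icc (0:ℝ) L, ∀ t ∈ Ioc (0:ℝ) T,
    pt p x t = α * pxx p x t - β_B * v t * px p x t
      + etafun ρ_m Q_m Q_M M (B x t) (p x t) (P x t)
      - l * p x t - (D / z_m) * p x t) ∧
  (∀ x ∈ Icc (0:ℝ) L, ∀ t ∈ Ioc (0:ℝ) T,
    pt P x t = β * pxx P x t - β_P * v t * px P x t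
      + (D / z_m) * (P_h - P x t)
      - etafun ρ_m Q_m Q_M M (B x t) (p x t) (P x t)
      + l * p x t) ∧
  -- Neumann boundary conditions
  (∀ t ∈ Ioc (0:ℝ) T,
    px B 0 t = 0 ∧ px B L t = 0 ∧ px p 0 t = 0 ∧ px p L t = 0 ∧
    px P 0 t = 0 ∧ px P L t = 0)


open Filter Topology


lemma deriv_nonpos_of_left_min {f : ℝ → ℝ} {a d : ℝ} (hf : HasDerivAt f d a)
    (hmin : ∀ᶠ τ in 𝓝[<] a, f a ≤ f τ) : d ≤ 0 := by
  have hs : Tendsto (slope f a) (𝓝[<] a) (𝓝 d) :=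
    (hasDerivAt_iff_tendsto_slope.mp hf).mono_left
      (nhdsWithin_mono a fun y hy => mem_compl_singleton_iff.mpr (ne_of_lt hy))
  refine le_of_tendsto hs ?_
  filter_upwards [hmin, eventually_mem_nhdsWithin] with τ h1 h2
  rw [slope_def_field]
  exact div_nonpos_of_nonneg_of_nonpos (by linarith) (by simp only [mem_Iio] at h2; linarith)

lemma deriv2_nonneg_right {g G : ℝ → ℝ} {x0 L A : ℝ} (hx0 : 0 ≤ x0) (hx0L : x0 < L)
    (hgc : ContinuousOn g (Icc 0 L))
    (hder : ∀ y ∈ Icc (0:ℝ) L, HasDerivAt g (G y) y)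
    (hG0 : G x0 = 0)
    (hA : HasDerivAt G A x0)
    (hmin : ∀ y ∈ Icc (0:ℝ) L, g x0 ≤ g y) : 0 ≤ A := by
  by_contra hneg
  push_neg at hneg
  have hs : Tendsto (slope G x0) (𝓝[>] x0) (𝓝 A) :=
    (hasDerivAt_iff_tendsto_slope.mp hA).mono_left
      (nhdsWithin_mono _ fun y hy => mem_compl_singleton_iff.mpr (ne_of_gt hy))
  have h1 : ∀ᶠ y in 𝓝[>] x0, slope G x0 y < 0 := hs.eventually_lt_const hneg
  have h2 : ∀ᶠ y in 𝓝[>] x0, y < L := mem_nhdsWithin_of_mem_nhds (Iio_mem_nhds hx0L)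
  have hall := (h1.and h2)
  rw [Filter.eventually_iff] at hall
  rw [mem_nhdsGT_iff_exists_Ioo_subset] at hall
  obtain ⟨u, hu, hsub⟩ := hall
  set y1 := (x0 + min u L) / 2 with hy1def
  have hmu : x0 < min u L := lt_min hu hx0L
  have hxy1 : x0 < y1 := by rw [hy1def]; linarith
  have h5 : y1 < min u L := by rw [hy1def]; linarith
  have hy1L : y1 < L := lt_of_lt_of_le h5 (min_le_right _ _)
  have hneg' : ∀ ξ ∈ Ioo x0 y1, G ξ < 0 := by
    intro ξ hξ
    have hξ' : ξ ∈ Ioo x0 u := ⟨hξ.1, lt_trans hξ.2 (lt_of_lt_of_le h5 (min_le_left _ _))⟩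
    obtain ⟨hsl, -⟩ := hsub hξ'
    rw [slope_def_field, hG0, sub_zero] at hsl
    rcases div_neg_iff.mp hsl with ⟨-, h⟩ | ⟨h, -⟩
    · exfalso; have := hξ.1; linarith
    · exact h
  obtain ⟨ξ, hξ, heq⟩ := exists_hasDerivAt_eq_slope g G hxy1
    (hgc.mono (Icc_subset_Icc hx0 hy1L.le))
    (fun ξ hξ => hder ξ ⟨le_trans hx0 hξ.1.le, le_trans hξ.2.le hy1L.le⟩)
  have hGneg := hneg' ξ hξ
  rw [heq] at hGneg
  have hgy : g y1 < g x0 := by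
    rcases div_neg_iff.mp hGneg with ⟨-, h⟩ | ⟨h, -⟩
    · exfalso; linarith
    · linarith
  have := hmin y1 ⟨le_trans hx0 hxy1.le, hy1L.le⟩
  linarith

lemma deriv2_nonneg_left {g G : ℝ → ℝ} {L A : ℝ} (hL : 0 < L)
    (hgc : ContinuousOn g (Icc 0 L))
    (hder : ∀ y ∈ Icc (0:ℝ) L, HasDerivAt g (G y) y)
    (hG0 : G L = 0)
    (hA : HasDerivAt G A L)
    (hmin : ∀ y ∈ Icc (0:ℝ) L, g L ≤ g y) : 0 ≤ A := by
  by_contra hneg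
  push_neg at hneg
  have hs : Tendsto (slope G L) (𝓝[<] L) (𝓝 A) :=
    (hasDerivAt_iff_tendsto_slope.mp hA).mono_left
      (nhdsWithin_mono _ fun y hy => mem_compl_singleton_iff.mpr (ne_of_lt hy))
  have h1 : ∀ᶠ y in 𝓝[<] L, slope G L y < 0 := hs.eventually_lt_const hneg
  have h2 : ∀ᶠ y in 𝓝[<] L, 0 < y := mem_nhdsWithin_of_mem_nhds (Ioi_mem_nhds hL)
  have hall := (h1.and h2)
  rw [Filter.eventually_iff] at hall
  rw [mem_nhdsLT_iff_exists_Ioo_subset] at hall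
  obtain ⟨u, hu, hsub⟩ := hall
  set y1 := (max u 0 + L) / 2 with hy1def
  have hmu : max u 0 < L := max_lt hu hL
  have hxy1 : y1 < L := by rw [hy1def]; linarith
  have h5 : max u 0 < y1 := by rw [hy1def]; linarith
  have hy10 : 0 < y1 := lt_of_le_of_lt (le_max_right _ _) h5
  have hpos' : ∀ ξ ∈ Ioo y1 L, 0 < G ξ := by
    intro ξ hξ
    have hξ' : ξ ∈ Ioo u L := ⟨lt_of_le_of_lt (le_max_left _ _) (lt_trans h5 hξ.1), hξ.2⟩
    obtain ⟨hsl, -⟩ := hsub hξ'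
    rw [slope_def_field, hG0, sub_zero] at hsl
    rcases div_neg_iff.mp hsl with ⟨h, -⟩ | ⟨-, h⟩
    · exact h
    · exfalso; have := hξ.2; linarith
  obtain ⟨ξ, hξ, heq⟩ := exists_hasDerivAt_eq_slope g G hxy1
    (hgc.mono (Icc_subset_Icc hy10.le le_rfl))
    (fun ξ hξ => hder ξ ⟨le_trans hy10.le hξ.1.le, hξ.2.le⟩)
  have hGpos := hpos' ξ hξ
  rw [heq] at hGpos
  have hgy : g y1 < g L := by
    have hd : 0 < L - y1 := by linarith
    rcases (div_pos_iff.mp hGpos) with ⟨h, -⟩ | ⟨-, h⟩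
    · linarith
    · exfalso; linarith
  have := hmin y1 ⟨hy10.le, hxy1.le⟩
  linarith

lemma max_principle {L T : ℝ} (hL : 0 < L) (hT : 0 < T)
    (w G : ℝ → ℝ → ℝ)
    (hc : ContinuousOn (fun q : ℝ × ℝ => w q.1 q.2) (Icc 0 L ×ˢ Icc 0 T))
    (hdt : ∀ x ∈ Icc (0:ℝ) L, ∀ t ∈ Ioc (0:ℝ) T, DifferentiableAt ℝ (fun τ => w x τ) t)
    (hG : ∀ x ∈ Icc (0:ℝ) L, ∀ t ∈ Ioc (0:ℝ) T, HasDerivAt (fun y => w y t) (G x t) x)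
    (hGd : ∀ x ∈ Icc (0:ℝ) L, ∀ t ∈ Ioc (0:ℝ) T, DifferentiableAt ℝ (fun y => G y t) x)
    (hneu : ∀ t ∈ Ioc (0:ℝ) T, G 0 t = 0 ∧ G L t = 0)
    (hpde : ∀ x ∈ Icc (0:ℝ) L, ∀ t ∈ Ioc (0:ℝ) T, w x t < 0 → G x t = 0 →
      0 ≤ deriv (fun y => G y t) x → 0 < deriv (fun τ => w x τ) t)
    (hinit : ∀ x ∈ Icc (0:ℝ) L, 0 ≤ w x 0) :
    ∀ x ∈ Icc (0:ℝ) L, ∀ t ∈ Icc (0:ℝ) T, 0 ≤ w x t := by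
  by_contra hcon
  push_neg at hcon
  obtain ⟨x1, hx1, t1, ht1, hneg1⟩ := hcon
  have hK : IsCompact (Icc (0:ℝ) L ×ˢ Icc (0:ℝ) T) := isCompact_Icc.prod isCompact_Icc
  obtain ⟨q0, hq0, hmin⟩ := hK.exists_isMinOn ⟨(x1, t1), mem_prod.mpr ⟨hx1, ht1⟩⟩ hc
  set x0 := q0.1 with hx0def
  set t0 := q0.2 with ht0def
  have hx0 : x0 ∈ Icc (0:ℝ) L := (mem_prod.mp hq0).1
  have ht0 : t0 ∈ Icc (0:ℝ) T := (mem_prod.mp hq0).2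
  have hmin' : ∀ q ∈ Icc (0:ℝ) L ×ˢ Icc (0:ℝ) T, w x0 t0 ≤ w q.1 q.2 :=
    fun q hq => isMinOn_iff.mp hmin q hq
  have hw0 : w x0 t0 < 0 :=
    lt_of_le_of_lt (hmin' (x1, t1) (mem_prod.mpr ⟨hx1, ht1⟩)) hneg1
  have ht0pos : 0 < t0 := by
    rcases lt_or_eq_of_le ht0.1 with h | h
    · exact h
    · exfalso; have h2 := hinit x0 hx0; rw [← h] at hw0; linarith
  have ht0' : t0 ∈ Ioc (0:ℝ) T := ⟨ht0pos, ht0.2⟩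
  have hminx : ∀ y ∈ Icc (0:ℝ) L, w x0 t0 ≤ w y t0 := fun y hy =>
    hmin' (y, t0) (mem_prod.mpr ⟨hy, ht0⟩)
  have hmint : ∀ τ ∈ Icc (0:ℝ) T, w x0 t0 ≤ w x0 τ := fun τ hτ =>
    hmin' (x0, τ) (mem_prod.mpr ⟨hx0, hτ⟩)
  -- continuity of the spatial slice
  have hgc : ContinuousOn (fun y => w y t0) (Icc 0 L) := by
    have : ContinuousOn ((fun q : ℝ × ℝ => w q.1 q.2) ∘ (fun y => (y, t0))) (Icc 0 L) :=
      hc.comp ((continuous_id.prodMk continuous_const).continuousOn)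
        (fun y hy => mem_prod.mpr ⟨hy, ht0⟩)
    exact this
  -- G vanishes at the minimum
  have hG0 : G x0 t0 = 0 := by
    rcases eq_or_lt_of_le hx0.1 with h0 | h0
    · rw [← h0]; exact (hneu t0 ht0').1
    rcases eq_or_lt_of_le hx0.2 with hL0 | hL0
    · rw [hL0]; exact (hneu t0 ht0').2
    · have hloc : IsLocalMin (fun y => w y t0) x0 := by
        have hnhds : Icc (0:ℝ) L ∈ 𝓝 x0 := Icc_mem_nhds h0 hL0
        exact Filter.eventually_of_mem hnhds (fun y hy => hminx y hy)
      exact hloc.hasDerivAt_eq_zero (hG x0 hx0 t0 ht0')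
  -- second derivative nonneg at the minimum
  have hA : 0 ≤ deriv (fun y => G y t0) x0 := by
    have hAd : HasDerivAt (fun y => G y t0) (deriv (fun y => G y t0) x0) x0 :=
      (hGd x0 hx0 t0 ht0').hasDerivAt
    rcases lt_or_eq_of_le hx0.2 with hlt | heq
    · exact deriv2_nonneg_right hx0.1 hlt hgc
        (fun y hy => hG y hy t0 ht0') hG0 hAd hminx
    · rw [heq] at hG0 hAd ⊢
      exact deriv2_nonneg_left hL hgc (fun y hy => hG y hy t0 ht0') hG0 hAd
        (by intro y hy; rw [← heq]; exact hminx y hy)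
  -- time derivative nonpos at the minimum
  have hDt : deriv (fun τ => w x0 τ) t0 ≤ 0 := by
    apply deriv_nonpos_of_left_min (hdt x0 hx0 t0 ht0').hasDerivAt
    have h1 : ∀ᶠ τ in 𝓝[<] t0, 0 < τ := mem_nhdsWithin_of_mem_nhds (Ioi_mem_nhds ht0pos)
    filter_upwards [h1, eventually_mem_nhdsWithin] with τ h1 h2
    simp only [mem_Iio] at h2
    exact hmint τ ⟨h1.le, le_trans h2.le ht0.2⟩
  have := hpde x0 hx0 t0 ht0' hw0 hG0 hA
  linarith

lemma hfun_nonneg {z_m k K_bg H I_in b : ℝ} (hzm : 0 < z_m) (hk : 0 < k)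
    (hKbg : 0 < K_bg) (hH : 0 < H) (hIin : 0 < I_in) (hb : 0 < b) :
    0 ≤ hfun z_m k K_bg H I_in b := by
  have hIpos : 0 < lightI I_in K_bg k z_m b := mul_pos hIin (Real.exp_pos _)
  have hI : lightI I_in K_bg k z_m b ≤ I_in := by
    unfold lightI
    nth_rewrite 2 [← mul_one I_in]
    apply mul_le_mul_of_nonneg_left _ hIin.le
    apply Real.exp_le_one_iff.mpr
    nlinarith [mul_pos (show (0:ℝ) < K_bg + k * b by nlinarith) hzm]
  unfold hfun
  apply div_nonneg
  · apply Real.log_nonneg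
    rw [le_div_iff₀ (by linarith)]
    linarith
  · nlinarith [mul_pos hzm (show (0:ℝ) < k * b + K_bg by nlinarith)]

set_option maxHeartbeats 1000000 in
/-- Quota invariance, Lemma 3.1, one-dimensional case: if the
initial data satisfy `Q_m ≤ p(x,0)/B(x,0) ≤ Q_M`, then
`Q_m·B(x,t) ≤ p(x,t) ≤ Q_M·B(x,t)` on `[0,L]×[0,T]`. -/
theorem quota_invariance
    (α β β_B β_P r Q_m Q_M z_m k K_bg H I_in l D ρ_m M P_h : ℝ)
    (hα : 0 < α) (hβ : 0 < β) (hβB : 0 < β_B) (hβP : 0 < β_P) (hr : 0 < r)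
    (hQm : 0 < Q_m) (hQM : 0 < Q_M) (hzm : 0 < z_m) (hk : 0 < k)
    (hKbg : 0 < K_bg) (hH : 0 < H) (hIin : 0 < I_in) (hl : 0 < l) (hD : 0 < D)
    (hρm : 0 < ρ_m) (hM : 0 < M) (hQmM : Q_m < Q_M) (hPh : 0 ≤ P_h)
    (L T : ℝ) (hL : 0 < L) (hT : 0 < T) (v : ℝ → ℝ) (hv : Continuous v)
    (B p P : ℝ → ℝ → ℝ)
    (hsol : IsPosClassicalSol α β β_B β_P r Q_m Q_M z_m k K_bg H I_in l D ρ_m M P_h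
      v L T B p P)
    (hinit : ∀ x ∈ Icc (0:ℝ) L, Q_m ≤ p x 0 / B x 0 ∧ p x 0 / B x 0 ≤ Q_M) :
    ∀ x ∈ Icc (0:ℝ) L, ∀ t ∈ Icc (0:ℝ) T,
      Q_m * B x t ≤ p x t ∧ p x t ≤ Q_M * B x t := by
  obtain ⟨hregB, hregp, hregP, hpos, hpdeB, hpdep, hpdeP, hneu⟩ := hsol
  have hDzm : 0 < D / z_m := div_pos hD hzm
  -- lower bound : w := p - Q_m * B
  have hlow : ∀ x ∈ Icc (0:ℝ) L, ∀ t ∈ Icc (0:ℝ) T, 0 ≤ p x t - Q_m * B x t := by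
    apply max_principle hL hT (fun x t => p x t - Q_m * B x t)
      (fun x t => px p x t - Q_m * px B x t)
    · exact hregp.1.sub (continuousOn_const.mul hregB.1)
    · intro x hx t ht
      exact ((hregp.2.1 x hx t ht).1).sub (((hregB.2.1 x hx t ht).1).const_mul Q_m)
    · intro x hx t ht
      exact ((hregp.2.1 x hx t ht).2.1.hasDerivAt).sub
        (((hregB.2.1 x hx t ht).2.1.hasDerivAt).const_mul Q_m)
    · intro x hx t ht
      exact ((hregp.2.1 x hx t ht).2.2).sub (((hregB.2.1 x hx t ht).2.2).const_mul Q_m)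
    · intro t ht
      obtain ⟨hB0, hBL, hp0, hpL, -, -⟩ := hneu t ht
      constructor <;> simp [hB0, hBL, hp0, hpL]
    · intro x hx t ht hw hG0 hA
      have hxt : t ∈ Icc (0:ℝ) T := ⟨ht.1.le, ht.2⟩
      obtain ⟨hBpos, hppos, hPpos⟩ := hpos x hx t hxt
      have hdtp := (hregp.2.1 x hx t ht).1
      have hdtB := (hregB.2.1 x hx t ht).1
      have hDeq : deriv (fun τ => p x τ - Q_m * B x τ) t = pt p x t - Q_m * pt B x t :=
        ((hdtp.hasDerivAt).sub ((hdtB.hasDerivAt).const_mul Q_m)).deriv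
      have hAeq : deriv (fun y => (px p y t - Q_m * px B y t)) x
          = pxx p x t - Q_m * pxx B x t :=
        (((hregp.2.1 x hx t ht).2.2.hasDerivAt).sub
          (((hregB.2.1 x hx t ht).2.2.hasDerivAt).const_mul Q_m)).deriv
      have hA2 : 0 ≤ pxx p x t - Q_m * pxx B x t := by rw [← hAeq]; exact hA
      have hG02 : px p x t - Q_m * px B x t = 0 := hG0
      have hw2 : p x t - Q_m * B x t < 0 := hw
      show 0 < deriv (fun τ => p x τ - Q_m * B x τ) t
      rw [hDeq]
      have hp := hpdep x hx t ht
      have hB := hpdeB x hx t ht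
      -- facts
      have hpx : px p x t = Q_m * px B x t := by linarith
      have hadv : β_B * v t * px p x t = Q_m * (β_B * v t * px B x t) := by
        rw [hpx]; ring
      have f1 : 0 ≤ α * (pxx p x t - Q_m * pxx B x t) := mul_nonneg hα.le hA2
      have fη : 0 < etafun ρ_m Q_m Q_M M (B x t) (p x t) (P x t) := by
        unfold etafun
        have h1 : 0 < (Q_M * B x t - p x t) / (Q_M - Q_m) :=
          div_pos (by nlinarith) (by linarith)
        have h2 : 0 < P x t / (P x t + M) := div_pos hPpos (by linarith)
        exact mul_pos (mul_pos hρm h1) h2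
      have fg : r * (1 - Q_m * B x t / p x t) * hfun z_m k K_bg H I_in (B x t) * B x t ≤ 0 := by
        have h1 : 1 - Q_m * B x t / p x t ≤ 0 := by
          rw [sub_nonpos, le_div_iff₀ hppos]
          linarith
        have hh : 0 ≤ hfun z_m k K_bg H I_in (B x t) :=
          hfun_nonneg hzm hk hKbg hH hIin hBpos
        have h2 : r * (1 - Q_m * B x t / p x t) ≤ 0 :=
          mul_nonpos_iff.mpr (Or.inl ⟨hr.le, h1⟩)
        have h3 : r * (1 - Q_m * B x t / p x t) * hfun z_m k K_bg H I_in (B x t) ≤ 0 :=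
          mul_nonpos_iff.mpr (Or.inr ⟨h2, hh⟩)
        exact mul_nonpos_iff.mpr (Or.inr ⟨h3, hBpos.le⟩)
      have fg' : Q_m * (r * (1 - Q_m * B x t / p x t) * hfun z_m k K_bg H I_in (B x t) * B x t) ≤ 0 :=
        mul_nonpos_iff.mpr (Or.inl ⟨hQm.le, fg⟩)
      rw [hp, hB]
      linarith [f1, fη, fg', hadv, mul_pos hDzm (sub_pos.mpr (sub_neg.mp hw2)),
        mul_pos hl (sub_pos.mpr (sub_neg.mp hw2))]
    · intro x hx
      have hB0 : 0 < B x 0 := (hpos x hx 0 ⟨le_refl _, hT.le⟩).1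
      have := (hinit x hx).1
      rw [le_div_iff₀ hB0] at this
      linarith
  -- upper bound : u := Q_M * B - p
  have hup : ∀ x ∈ Icc (0:ℝ) L, ∀ t ∈ Icc (0:ℝ) T, 0 ≤ Q_M * B x t - p x t := by
    apply max_principle hL hT (fun x t => Q_M * B x t - p x t)
      (fun x t => Q_M * px B x t - px p x t)
    · exact (continuousOn_const.mul hregB.1).sub hregp.1
    · intro x hx t ht
      exact (((hregB.2.1 x hx t ht).1).const_mul Q_M).sub ((hregp.2.1 x hx t ht).1)
    · intro x hx t ht
      exact (((hregB.2.1 x hx t ht).2.1.hasDerivAt).const_mul Q_M).sub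
        ((hregp.2.1 x hx t ht).2.1.hasDerivAt)
    · intro x hx t ht
      exact (((hregB.2.1 x hx t ht).2.2).const_mul Q_M).sub ((hregp.2.1 x hx t ht).2.2)
    · intro t ht
      obtain ⟨hB0, hBL, hp0, hpL, -, -⟩ := hneu t ht
      constructor <;> simp [hB0, hBL, hp0, hpL]
    · intro x hx t ht hw hG0 hA
      have hxt : t ∈ Icc (0:ℝ) T := ⟨ht.1.le, ht.2⟩
      obtain ⟨hBpos, hppos, hPpos⟩ := hpos x hx t hxt
      have hdtp := (hregp.2.1 x hx t ht).1
      have hdtB := (hregB.2.1 x hx t ht).1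
      have hDeq : deriv (fun τ => Q_M * B x τ - p x τ) t = Q_M * pt B x t - pt p x t :=
        ((hdtB.hasDerivAt).const_mul Q_M).sub (hdtp.hasDerivAt) |>.deriv
      have hAeq : deriv (fun y => (Q_M * px B y t - px p y t)) x
          = Q_M * pxx B x t - pxx p x t :=
        ((((hregB.2.1 x hx t ht).2.2.hasDerivAt).const_mul Q_M).sub
          ((hregp.2.1 x hx t ht).2.2.hasDerivAt)).deriv
      have hA2 : 0 ≤ Q_M * pxx B x t - pxx p x t := by rw [← hAeq]; exact hA
      have hG02 : Q_M * px B x t - px p x t = 0 := hG0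
      have hw2 : Q_M * B x t - p x t < 0 := hw
      show 0 < deriv (fun τ => Q_M * B x τ - p x τ) t
      rw [hDeq]
      have hp := hpdep x hx t ht
      have hB := hpdeB x hx t ht
      have hpx : px p x t = Q_M * px B x t := by linarith
      have hadv : β_B * v t * px p x t = Q_M * (β_B * v t * px B x t) := by
        rw [hpx]; ring
      have f1 : 0 ≤ α * (Q_M * pxx B x t - pxx p x t) := mul_nonneg hα.le hA2
      have fη : etafun ρ_m Q_m Q_M M (B x t) (p x t) (P x t) < 0 := by
        unfold etafun
        have h1 : (Q_M * B x t - p x t) / (Q_M - Q_m) < 0 :=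
          div_neg_of_neg_of_pos (by linarith) (by linarith)
        have h2 : 0 < P x t / (P x t + M) := div_pos hPpos (by linarith)
        exact mul_neg_of_neg_of_pos (mul_neg_of_pos_of_neg hρm h1) h2
      have fg : 0 ≤ r * (1 - Q_m * B x t / p x t) * hfun z_m k K_bg H I_in (B x t) * B x t := by
        have h1 : 0 ≤ 1 - Q_m * B x t / p x t := by
          rw [sub_nonneg, div_le_one hppos]
          nlinarith
        have hh : 0 ≤ hfun z_m k K_bg H I_in (B x t) :=
          hfun_nonneg hzm hk hKbg hH hIin hBpos
        exact mul_nonneg (mul_nonneg (mul_nonneg hr.le h1) hh) hBpos.le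
      have fg' : 0 ≤ Q_M * (r * (1 - Q_m * B x t / p x t) * hfun z_m k K_bg H I_in (B x t) * B x t) :=
        mul_nonneg hQM.le fg
      rw [hp, hB]
      linarith [f1, fη, fg', hadv, mul_pos hDzm (sub_pos.mpr (sub_neg.mp hw2)),
        mul_pos hl (sub_pos.mpr (sub_neg.mp hw2))]
    · intro x hx
      have hB0 : 0 < B x 0 := (hpos x hx 0 ⟨le_refl _, hT.le⟩).1
      have := (hinit x hx).2
      rw [div_le_iff₀ hB0] at this
      linarith
  intro x hx t ht
  have h1 := hlow x hx t ht
  have h2 := hup x hx t ht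
  constructor <;> linarith
end

section
/- (Global uniform boundedness, Theorem 3.6, one-dimensional case.) Let (B, p, P) be a triple of functions whose restriction to [0,L]×[0,T] is a positive classical solution of the one-dimensional system for every T > 0, and whose initial data satisfy Q_m ≤ p(x,0)/B(x,0) ≤ Q_M for every x ∈ [0,L]. Then there exists a constant C > 0, independent of t, such that max_{x∈[0,L]} B(x,t) + max_{x∈[0,L]} p(x,t) + max_{x∈[0,L]} P(x,t) ≤ C for every t ≥ 0. -/
open Set

open Filter Topology

lemma max_principle_s8 (L T aa lam c : ℝ) (hL : 0 < L) (hT : 0 < T) (hlam : 0 < lam)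
    (haa : 0 < aa)
    (u : ℝ → ℝ → ℝ) (hreg : ClassReg L T u)
    (hpde : ∀ x ∈ Icc (0:ℝ) L, ∀ t ∈ Ioc (0:ℝ) T, px u x t = 0 →
      pt u x t ≤ aa * pxx u x t + c - lam * u x t)
    (hneu : ∀ t ∈ Ioc (0:ℝ) T, px u 0 t = 0 ∧ px u L t = 0)
    (K0 : ℝ) (hK0 : ∀ x ∈ Icc (0:ℝ) L, u x 0 ≤ K0) :
    ∀ x ∈ Icc (0:ℝ) L, ∀ t ∈ Icc (0:ℝ) T, u x t ≤ max K0 (c / lam) := by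
  by_contra hcon
  push_neg at hcon
  obtain ⟨x1, hx1, t1, ht1, hgt⟩ := hcon
  set Mb := max K0 (c / lam) with hMbdef
  set M := (Mb + u x1 t1) / 2 with hMdef
  have hK0Mb : K0 ≤ Mb := le_max_left _ _
  have hcMb : c / lam ≤ Mb := le_max_right _ _
  have hMbM : Mb < M := by rw [hMdef]; linarith
  have hMlt : M < u x1 t1 := by rw [hMdef]; linarith
  have ht1pos : 0 < t1 := by
    rcases ht1.1.lt_or_eq with h | h
    · exact h
    · exfalso; have := hK0 x1 hx1; rw [← h] at hgt; linarith
  have hsubS : Icc (0:ℝ) L ×ˢ Icc (0:ℝ) t1 ⊆ Icc (0:ℝ) L ×ˢ Icc (0:ℝ) T :=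
    Set.prod_mono_right (Icc_subset_Icc le_rfl ht1.2)
  have hcont : ContinuousOn (fun q : ℝ × ℝ => u q.1 q.2) (Icc (0:ℝ) L ×ˢ Icc (0:ℝ) t1) :=
    hreg.1.mono hsubS
  set K : Set (ℝ × ℝ) := (Icc (0:ℝ) L ×ˢ Icc (0:ℝ) t1) ∩
      (fun q : ℝ × ℝ => u q.1 q.2) ⁻¹' Ici M with hKdef
  have hScomp : IsCompact (Icc (0:ℝ) L ×ˢ Icc (0:ℝ) t1) := isCompact_Icc.prod isCompact_Icc
  have hKclosed : IsClosed K :=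
    hcont.preimage_isClosed_of_isClosed (isClosed_Icc.prod isClosed_Icc) isClosed_Ici
  have hKcomp : IsCompact K := hScomp.of_isClosed_subset hKclosed inter_subset_left
  have hKne : K.Nonempty := ⟨(x1, t1), ⟨⟨hx1, ht1pos.le, le_rfl⟩, hMlt.le⟩⟩
  set A := Prod.snd '' K with hAdef
  have hAcomp : IsCompact A := hKcomp.image continuous_snd
  have hAne : A.Nonempty := hKne.image _
  set t0 := sInf A with ht0def
  obtain ⟨⟨x0, t0'⟩, hq0, hsnd⟩ := hAcomp.sInf_mem hAne
  simp only [← ht0def] at hsnd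
  subst hsnd
  have hx0 : x0 ∈ Icc (0:ℝ) L := hq0.1.1
  have ht0Icc : t0 ∈ Icc (0:ℝ) t1 := hq0.1.2
  have hq0M : M ≤ u x0 t0 := hq0.2
  have hstar : ∀ t, 0 ≤ t → t < t0 → ∀ x ∈ Icc (0:ℝ) L, u x t < M := by
    intro t h0 hlt x hx
    by_contra hge
    push_neg at hge
    have htA : t ∈ A := ⟨(x, t), ⟨⟨hx, h0, hlt.le.trans ht0Icc.2⟩, hge⟩, rfl⟩
    exact absurd (csInf_le hAcomp.bddBelow htA) (not_le.2 hlt)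
  have ht0pos : 0 < t0 := by
    rcases ht0Icc.1.lt_or_eq with h | h
    · exact h
    · exfalso; rw [← h] at hq0M; linarith [hK0 x0 hx0]
  have hne2 : (𝓝[Ioo (0:ℝ) t0] t0).NeBot := by
    rw [← mem_closure_iff_nhdsWithin_neBot, closure_Ioo ht0pos.ne]
    exact ⟨ht0pos.le, le_rfl⟩
  have hleftlim : ∀ x ∈ Icc (0:ℝ) L, u x t0 ≤ M := by
    intro x hx
    by_contra hgt'
    push_neg at hgt'
    have hmaps : MapsTo (fun τ : ℝ => (x, τ)) (Icc (0:ℝ) t1) (Icc (0:ℝ) L ×ˢ Icc (0:ℝ) t1) :=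
      fun τ hτ => ⟨hx, hτ⟩
    have hcw : ContinuousWithinAt (fun τ => u x τ) (Icc (0:ℝ) t1) t0 :=
      (hcont.comp ((continuous_const.prodMk continuous_id).continuousOn) hmaps) t0 ht0Icc
    have hev : ∀ᶠ τ in 𝓝[Icc (0:ℝ) t1] t0, M < u x τ :=
      hcw.eventually (eventually_gt_nhds hgt')
    have hmono : 𝓝[Ioo (0:ℝ) t0] t0 ≤ 𝓝[Icc (0:ℝ) t1] t0 :=
      nhdsWithin_mono _ (fun τ hτ => ⟨hτ.1.le, hτ.2.le.trans ht0Icc.2⟩)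
    obtain ⟨τ, hτgt, hτmem⟩ := ((hev.filter_mono hmono).and eventually_mem_nhdsWithin).exists
    exact absurd (hstar τ hτmem.1.le hτmem.2 x hx) (not_lt.2 hτgt.le)
  have hMeq : u x0 t0 = M := le_antisymm (hleftlim x0 hx0) hq0M
  have ht0T : t0 ∈ Ioc (0:ℝ) T := ⟨ht0pos, ht0Icc.2.trans ht1.2⟩
  obtain ⟨hdt, hdx, hdxx⟩ := hreg.2.1 x0 hx0 t0 ht0T
  have hpt : 0 ≤ pt u x0 t0 := by
    have hd : Tendsto (slope (fun τ => u x0 τ) t0) (𝓝[≠] t0) (𝓝 (pt u x0 t0)) :=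
      hasDerivAt_iff_tendsto_slope.1 hdt.hasDerivAt
    have hd2 : Tendsto (slope (fun τ => u x0 τ) t0) (𝓝[Ioo (0:ℝ) t0] t0) (𝓝 (pt u x0 t0)) :=
      hd.mono_left (nhdsWithin_mono _ (fun τ hτ => ne_of_lt hτ.2))
    refine ge_of_tendsto hd2 ?_
    filter_upwards [eventually_mem_nhdsWithin] with τ hτ
    have hlt := hstar τ hτ.1.le hτ.2 x0 hx0
    rw [slope_def_field]
    have h1 : u x0 τ - u x0 t0 < 0 := by rw [hMeq]; linarith
    exact (div_pos_of_neg_of_neg h1 (by linarith [hτ.2])).le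
  have hpx : px u x0 t0 = 0 := by
    rcases hx0.1.lt_or_eq with h0 | h0
    · rcases hx0.2.lt_or_eq with hLl | hLl
      · have hloc : IsLocalMax (fun y => u y t0) x0 := by
          filter_upwards [Icc_mem_nhds h0 hLl] with y hy
          calc u y t0 ≤ M := hleftlim y hy
          _ = u x0 t0 := hMeq.symm
        exact hloc.deriv_eq_zero
      · rw [hLl]; exact (hneu t0 ht0T).2
    · rw [← h0]; exact (hneu t0 ht0T).1
  have hd2x : ∀ y ∈ Icc (0:ℝ) L, HasDerivAt (fun z => u z t0) (px u y t0) y :=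
    fun y hy => ((hreg.2.1 y hy t0 ht0T).2.1).hasDerivAt
  have hcont2 : ∀ s : Set ℝ, s ⊆ Icc (0:ℝ) L → ContinuousOn (fun z => u z t0) s :=
    fun s hs y hy => ((hd2x y (hs hy)).continuousAt).continuousWithinAt
  have hpxx : pxx u x0 t0 ≤ 0 := by
    by_contra hpos
    push_neg at hpos
    have hG : Tendsto (slope (fun y => px u y t0) x0) (𝓝[≠] x0) (𝓝 (pxx u x0 t0)) :=
      hasDerivAt_iff_tendsto_slope.1 hdxx.hasDerivAt
    rcases hx0.2.lt_or_eq with hxL | hxL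
    · -- x0 < L : work on the right of x0
      have hGr : Tendsto (slope (fun y => px u y t0) x0) (𝓝[>] x0) (𝓝 (pxx u x0 t0)) :=
        hG.mono_left (nhdsWithin_mono _ fun y hy => ne_of_gt hy)
      have hev2 : ∀ᶠ y in 𝓝[>] x0, 0 < slope (fun y => px u y t0) x0 y :=
        hGr.eventually (eventually_gt_nhds hpos)
      obtain ⟨δ, hδ, hsubs⟩ := mem_nhdsGT_iff_exists_Ioo_subset.1 hev2
      set y2 := (x0 + min δ L) / 2 with hy2def
      have hxmin : x0 < min δ L := lt_min hδ hxL
      have hy2a : x0 < y2 := by rw [hy2def]; linarith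
      have hy2b : y2 < min δ L := by rw [hy2def]; linarith
      have hy2L : y2 ≤ L := hy2b.le.trans (min_le_right _ _)
      have hy2Icc : y2 ∈ Icc (0:ℝ) L := ⟨hx0.1.trans hy2a.le, hy2L⟩
      have hGpos : ∀ ξ ∈ Ioo x0 y2, 0 < px u ξ t0 := by
        intro ξ hξ
        have hm : ξ ∈ Ioo x0 δ := ⟨hξ.1, hξ.2.trans_le (hy2b.le.trans (min_le_left _ _))⟩
        have h2 := hsubs hm
        simp only [Set.mem_setOf_eq] at h2
        rw [slope_def_field, hpx, sub_zero] at h2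
        rcases div_pos_iff.1 h2 with ⟨h, _⟩ | ⟨_, h⟩
        · exact h
        · linarith [hξ.1]
      obtain ⟨ξ, hξ, heq⟩ := exists_hasDerivAt_eq_slope (fun z => u z t0) (fun y => px u y t0)
        hy2a (hcont2 _ (Icc_subset_Icc hx0.1 hy2L))
        (fun ξ hξ => hd2x ξ ⟨hx0.1.trans hξ.1.le, hξ.2.le.trans hy2L⟩)
      have heq' : px u ξ t0 = (u y2 t0 - u x0 t0) / (y2 - x0) := heq
      have h1 := hGpos ξ hξ
      rw [heq'] at h1
      rcases div_pos_iff.1 h1 with ⟨h, _⟩ | ⟨_, h⟩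
      · linarith [hleftlim y2 hy2Icc, hMeq.ge]
      · linarith [hy2a]
    · -- x0 = L : work on the left of x0
      have hx0pos : 0 < x0 := by rw [hxL]; exact hL
      have hGl : Tendsto (slope (fun y => px u y t0) x0) (𝓝[<] x0) (𝓝 (pxx u x0 t0)) :=
        hG.mono_left (nhdsWithin_mono _ fun y hy => ne_of_lt hy)
      have hev2 : ∀ᶠ y in 𝓝[<] x0, 0 < slope (fun y => px u y t0) x0 y :=
        hGl.eventually (eventually_gt_nhds hpos)
      obtain ⟨l', hl', hsubs⟩ := mem_nhdsLT_iff_exists_Ioo_subset.1 hev2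
      set y2 := (max l' 0 + x0) / 2 with hy2def
      have hmax : max l' 0 < x0 := max_lt hl' hx0pos
      have hy2a : y2 < x0 := by rw [hy2def]; linarith
      have hy2b : max l' 0 < y2 := by rw [hy2def]; linarith
      have hy2Icc : y2 ∈ Icc (0:ℝ) L :=
        ⟨(le_max_right l' 0).trans hy2b.le, by rw [← hxL]; exact hy2a.le⟩
      have hGneg : ∀ ξ ∈ Ioo y2 x0, px u ξ t0 < 0 := by
        intro ξ hξ
        have hm : ξ ∈ Ioo l' x0 := ⟨((le_max_left l' 0).trans hy2b.le).trans_lt hξ.1, hξ.2⟩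
        have h2 := hsubs hm
        simp only [Set.mem_setOf_eq] at h2
        rw [slope_def_field, hpx, sub_zero] at h2
        rcases div_pos_iff.1 h2 with ⟨_, hh⟩ | ⟨hh, _⟩
        · linarith [hξ.2]
        · exact hh
      obtain ⟨ξ, hξ, heq⟩ := exists_hasDerivAt_eq_slope (fun z => u z t0) (fun y => px u y t0)
        hy2a (hcont2 _ (Icc_subset_Icc hy2Icc.1 hxL.le))
        (fun ξ hξ => hd2x ξ ⟨hy2Icc.1.trans hξ.1.le, hξ.2.le.trans hxL.le⟩)
      have heq' : px u ξ t0 = (u x0 t0 - u y2 t0) / (x0 - y2) := heq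
      have h1 := hGneg ξ hξ
      rw [heq'] at h1
      rcases div_neg_iff.1 h1 with ⟨_, hdn⟩ | ⟨hh, _⟩
      · linarith [hy2a]
      · linarith [hleftlim y2 hy2Icc, hMeq.ge]
  have hineq := hpde x0 hx0 t0 ht0T hpx
  rw [hMeq] at hineq
  have hMc : c < lam * M := by
    have hlt : c / lam < M := lt_of_le_of_lt hcMb hMbM
    calc c = lam * (c / lam) := by field_simp
    _ < lam * M := (mul_lt_mul_iff_right₀ hlam).2 hlt
  have haux : aa * pxx u x0 t0 ≤ 0 := mul_nonpos_iff.2 (Or.inl ⟨haa.le, hpxx⟩)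
  linarith

lemma reactB_bound (r Q_m z_m k K_bg H I_in : ℝ)
    (hr : 0 < r) (hQm : 0 < Q_m) (hzm : 0 < z_m) (hk : 0 < k) (hKbg : 0 < K_bg)
    (hH : 0 < H) (hIin : 0 < I_in)
    (b' p' : ℝ) (hb : 0 < b') (hp : 0 < p') :
    r * (1 - Q_m * b' / p') * hfun z_m k K_bg H I_in b' * b' ≤
      r * Real.log ((H + I_in) / H) / (z_m * k) := by
  have hlogU : 0 ≤ Real.log ((H + I_in) / H) :=
    Real.log_nonneg (by rw [le_div_iff₀ hH]; linarith)
  have hc0pos : 0 ≤ r * Real.log ((H + I_in) / H) / (z_m * k) :=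
    div_nonneg (mul_nonneg hr.le hlogU) (by positivity)
  have hIpos : 0 < lightI I_in K_bg k z_m b' := by unfold lightI; positivity
  have hIlt : lightI I_in K_bg k z_m b' ≤ I_in := by
    unfold lightI
    have hex : Real.exp (-((K_bg + k * b') * z_m)) ≤ 1 :=
      Real.exp_le_one_iff.2 (by nlinarith [mul_pos hzm hKbg, mul_pos (mul_pos hk hb) hzm])
    nlinarith
  have hfrac1 : 1 ≤ (H + I_in) / (H + lightI I_in K_bg k z_m b') := by
    rw [le_div_iff₀ (by linarith)]; linarith
  have hfracle : (H + I_in) / (H + lightI I_in K_bg k z_m b') ≤ (H + I_in) / H := by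
    gcongr <;> linarith
  have hlog0 : 0 ≤ Real.log ((H + I_in) / (H + lightI I_in K_bg k z_m b')) :=
    Real.log_nonneg hfrac1
  have hlogle : Real.log ((H + I_in) / (H + lightI I_in K_bg k z_m b')) ≤
      Real.log ((H + I_in) / H) :=
    (Real.log_le_log_iff (div_pos (by linarith) (by linarith))
      (div_pos (by linarith) hH)).2 hfracle
  have hden2 : 0 < z_m * (k * b' + K_bg) := by positivity
  have hhle : hfun z_m k K_bg H I_in b' ≤
      Real.log ((H + I_in) / H) / (z_m * (k * b' + K_bg)) := by
    unfold hfun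
    exact (div_le_div_iff_of_pos_right hden2).2 hlogle
  have hh0 : 0 ≤ hfun z_m k K_bg H I_in b' := by
    unfold hfun; exact div_nonneg hlog0 hden2.le
  rcases le_or_gt (1 - Q_m * b' / p') 0 with hs | hs
  · have h2 : 0 ≤ hfun z_m k K_bg H I_in b' * b' := mul_nonneg hh0 hb.le
    have h3 : r * (1 - Q_m * b' / p') ≤ 0 := mul_nonpos_iff.2 (Or.inl ⟨hr.le, hs⟩)
    have h4 : r * (1 - Q_m * b' / p') * (hfun z_m k K_bg H I_in b' * b') ≤ 0 :=
      mul_nonpos_iff.2 (Or.inr ⟨h3, h2⟩)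
    nlinarith [h4, hc0pos]
  · have hs1 : 1 - Q_m * b' / p' ≤ 1 := by
      have : 0 < Q_m * b' / p' := by positivity
      linarith
    have hbb : b' / (z_m * (k * b' + K_bg)) ≤ 1 / (z_m * k) := by
      rw [div_le_div_iff₀ hden2 (by positivity)]
      nlinarith [mul_pos hzm hKbg]
    calc r * (1 - Q_m * b' / p') * hfun z_m k K_bg H I_in b' * b'
        ≤ r * 1 * hfun z_m k K_bg H I_in b' * b' := by
          nlinarith [mul_nonneg hh0 hb.le, mul_nonneg (mul_nonneg hh0 hb.le) hr.le]
      _ = r * (hfun z_m k K_bg H I_in b' * b') := by ring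
      _ ≤ r * ((Real.log ((H + I_in) / H) / (z_m * (k * b' + K_bg))) * b') :=
          mul_le_mul_of_nonneg_left (mul_le_mul_of_nonneg_right hhle hb.le) hr.le
      _ = r * Real.log ((H + I_in) / H) * (b' / (z_m * (k * b' + K_bg))) := by ring
      _ ≤ r * Real.log ((H + I_in) / H) * (1 / (z_m * k)) :=
          mul_le_mul_of_nonneg_left hbb (mul_nonneg hr.le hlogU)
      _ = r * Real.log ((H + I_in) / H) / (z_m * k) := by ring

lemma eta_upper (ρ_m Q_m Q_M M CB : ℝ) (hρm : 0 < ρ_m) (hQM : 0 < Q_M) (hM : 0 < M)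
    (hdQ : 0 < Q_M - Q_m) (hCB0 : 0 < CB)
    (b' p' P' : ℝ) (hp : 0 < p') (hP : 0 < P') (hbC : b' ≤ CB) :
    etafun ρ_m Q_m Q_M M b' p' P' ≤ ρ_m * Q_M * CB / (Q_M - Q_m) := by
  unfold etafun
  have hw1 : P' / (P' + M) ≤ 1 := by
    rw [div_le_one (by linarith)]; linarith
  have hw0 : 0 ≤ P' / (P' + M) := (div_pos hP (by linarith)).le
  have hXle : Q_M * b' - p' ≤ Q_M * CB := by nlinarith
  have hc1nn : 0 ≤ ρ_m * Q_M * CB / (Q_M - Q_m) :=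
    div_nonneg (mul_nonneg (mul_nonneg hρm.le hQM.le) hCB0.le) hdQ.le
  rcases le_or_gt (Q_M * b' - p') 0 with hX | hX
  · have hXd : (Q_M * b' - p') / (Q_M - Q_m) ≤ 0 :=
      div_nonpos_iff.2 (Or.inr ⟨hX, hdQ.le⟩)
    nlinarith [mul_nonpos_iff.2 (Or.inr ⟨mul_nonpos_iff.2 (Or.inr ⟨hXd, hρm.le⟩), hw0⟩)]
  · have e0 : 0 ≤ ρ_m * ((Q_M * b' - p') / (Q_M - Q_m)) :=
      mul_nonneg hρm.le (div_nonneg hX.le hdQ.le)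
    have e1 : ρ_m * ((Q_M * b' - p') / (Q_M - Q_m)) * (P' / (P' + M)) ≤
        ρ_m * ((Q_M * b' - p') / (Q_M - Q_m)) := by nlinarith
    have e2 : ρ_m * ((Q_M * b' - p') / (Q_M - Q_m)) ≤ ρ_m * Q_M * CB / (Q_M - Q_m) := by
      calc ρ_m * ((Q_M * b' - p') / (Q_M - Q_m))
          ≤ ρ_m * (Q_M * CB / (Q_M - Q_m)) :=
            mul_le_mul_of_nonneg_left ((div_le_div_iff_of_pos_right hdQ).2 (by linarith)) hρm.le
        _ = ρ_m * Q_M * CB / (Q_M - Q_m) := by ring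
    linarith

lemma eta_lower (ρ_m Q_m Q_M M Cp : ℝ) (hρm : 0 < ρ_m) (hQM : 0 < Q_M) (hM : 0 < M)
    (hdQ : 0 < Q_M - Q_m)
    (b' p' P' : ℝ) (hb : 0 < b') (hp : 0 < p') (hP : 0 < P') (hpC : p' ≤ Cp) :
    -etafun ρ_m Q_m Q_M M b' p' P' ≤ ρ_m * Cp / (Q_M - Q_m) := by
  unfold etafun
  have hw1 : P' / (P' + M) ≤ 1 := by
    rw [div_le_one (by linarith)]; linarith
  have hw0 : 0 ≤ P' / (P' + M) := (div_pos hP (by linarith)).le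
  have hrhs : 0 ≤ ρ_m * Cp / (Q_M - Q_m) :=
    div_nonneg (mul_nonneg hρm.le (hp.le.trans hpC)) hdQ.le
  rcases le_or_gt 0 (Q_M * b' - p') with hX | hX
  · have h0 : 0 ≤ ρ_m * ((Q_M * b' - p') / (Q_M - Q_m)) * (P' / (P' + M)) :=
      mul_nonneg (mul_nonneg hρm.le (div_nonneg hX hdQ.le)) hw0
    linarith
  · have ha : ρ_m * ((Q_M * b' - p') / (Q_M - Q_m)) ≤ 0 :=
      mul_nonpos_iff.2 (Or.inl ⟨hρm.le, div_nonpos_iff.2 (Or.inr ⟨hX.le, hdQ.le⟩)⟩)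
    have e1 : ρ_m * ((Q_M * b' - p') / (Q_M - Q_m)) ≤
        ρ_m * ((Q_M * b' - p') / (Q_M - Q_m)) * (P' / (P' + M)) := by nlinarith
    have h1 : -(Q_M * b' - p') ≤ Cp := by nlinarith [mul_pos hQM hb]
    have e2 : -(ρ_m * ((Q_M * b' - p') / (Q_M - Q_m))) ≤ ρ_m * Cp / (Q_M - Q_m) := by
      have e3 : -(ρ_m * ((Q_M * b' - p') / (Q_M - Q_m))) =
          ρ_m * (-(Q_M * b' - p')) / (Q_M - Q_m) := by ring
      rw [e3]
      exact (div_le_div_iff_of_pos_right hdQ).2 (mul_le_mul_of_nonneg_left h1 hρm.le)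
    linarith

set_option maxHeartbeats 1000000 in
/-- Global uniform boundedness, Theorem 3.6, one-dimensional case:
if `(B,p,P)` is a positive classical solution on `[0,L]×[0,T]` for every `T > 0`
with admissible initial quota, then there is a constant `C > 0` independent of
`t` bounding `max_x B + max_x p + max_x P` uniformly in `t ≥ 0`. -/
theorem global_uniform_boundedness
    (α β β_B β_P r Q_m Q_M z_m k K_bg H I_in l D ρ_m M P_h : ℝ)
    (hα : 0 < α) (hβ : 0 < β) (hβB : 0 < β_B) (hβP : 0 < β_P) (hr : 0 < r)
    (hQm : 0 < Q_m) (hQM : 0 < Q_M) (hzm : 0 < z_m) (hk : 0 < k)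
    (hKbg : 0 < K_bg) (hH : 0 < H) (hIin : 0 < I_in) (hl : 0 < l) (hD : 0 < D)
    (hρm : 0 < ρ_m) (hM : 0 < M) (hQmM : Q_m < Q_M) (hPh : 0 ≤ P_h)
    (L : ℝ) (hL : 0 < L) (v : ℝ → ℝ) (hv : Continuous v)
    (B p P : ℝ → ℝ → ℝ)
    (hsol : ∀ T > (0:ℝ),
      IsPosClassicalSol α β β_B β_P r Q_m Q_M z_m k K_bg H I_in l D ρ_m M P_h
        v L T B p P)
    (hinit : ∀ x ∈ Icc (0:ℝ) L, Q_m ≤ p x 0 / B x 0 ∧ p x 0 / B x 0 ≤ Q_M) :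
    ∃ C > (0:ℝ), ∀ t ≥ (0:ℝ),
      sSup ((fun x => B x t) '' Icc (0:ℝ) L) +
      sSup ((fun x => p x t) '' Icc (0:ℝ) L) +
      sSup ((fun x => P x t) '' Icc (0:ℝ) L) ≤ C := by
  have hdQ : (0:ℝ) < Q_M - Q_m := sub_pos.2 hQmM
  have hlam1 : (0:ℝ) < l + D / z_m := by positivity
  have hlam2 : (0:ℝ) < D / z_m := by positivity
  obtain ⟨hregB1, hregp1, hregP1, hpos1, -⟩ := hsol 1 one_pos
  have hslice : ∀ f : ℝ → ℝ → ℝ, ClassReg L 1 f →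
      ContinuousOn (fun x => f x 0) (Icc (0:ℝ) L) := by
    intro f hf
    have hmaps : MapsTo (fun x : ℝ => (x, (0:ℝ))) (Icc (0:ℝ) L)
        (Icc (0:ℝ) L ×ˢ Icc (0:ℝ) 1) := fun x hx => ⟨hx, le_rfl, zero_le_one⟩
    exact hf.1.comp ((continuous_id.prodMk continuous_const).continuousOn) hmaps
  have hneI : (Icc (0:ℝ) L).Nonempty := nonempty_Icc.2 hL.le
  obtain ⟨xB, hxB, hmaxB⟩ := isCompact_Icc.exists_isMaxOn hneI (hslice B hregB1)
  obtain ⟨xp, hxp, hmaxp⟩ := isCompact_Icc.exists_isMaxOn hneI (hslice p hregp1)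
  obtain ⟨xP, hxP, hmaxP⟩ := isCompact_Icc.exists_isMaxOn hneI (hslice P hregP1)
  obtain ⟨KB, hKBdef⟩ : ∃ x : ℝ, x = B xB 0 := ⟨_, rfl⟩
  obtain ⟨Kp, hKpdef⟩ : ∃ x : ℝ, x = p xp 0 := ⟨_, rfl⟩
  obtain ⟨KP, hKPdef⟩ : ∃ x : ℝ, x = P xP 0 := ⟨_, rfl⟩
  have hKB : ∀ x ∈ Icc (0:ℝ) L, B x 0 ≤ KB := by
    intro x hx; rw [hKBdef]; exact hmaxB hx
  have hKp : ∀ x ∈ Icc (0:ℝ) L, p x 0 ≤ Kp := by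
    intro x hx; rw [hKpdef]; exact hmaxp hx
  have hKP : ∀ x ∈ Icc (0:ℝ) L, P x 0 ≤ KP := by
    intro x hx; rw [hKPdef]; exact hmaxP hx
  have h01 : (0:ℝ) ∈ Icc (0:ℝ) (1:ℝ) := ⟨le_rfl, zero_le_one⟩
  have hKBpos : 0 < KB := by rw [hKBdef]; exact (hpos1 xB hxB 0 h01).1
  have hKppos : 0 < Kp := by rw [hKpdef]; exact (hpos1 xp hxp 0 h01).2.1
  have hKPpos : 0 < KP := by rw [hKPdef]; exact (hpos1 xP hxP 0 h01).2.2
  obtain ⟨c0, hc0def⟩ : ∃ x : ℝ, x = r * Real.log ((H + I_in) / H) / (z_m * k) := ⟨_, rfl⟩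
  obtain ⟨CB, hCBdef⟩ : ∃ x : ℝ, x = max KB (c0 / (l + D / z_m)) := ⟨_, rfl⟩
  obtain ⟨c1, hc1def⟩ : ∃ x : ℝ, x = ρ_m * Q_M * CB / (Q_M - Q_m) := ⟨_, rfl⟩
  obtain ⟨Cp, hCpdef⟩ : ∃ x : ℝ, x = max Kp (c1 / (l + D / z_m)) := ⟨_, rfl⟩
  obtain ⟨c2, hc2def⟩ : ∃ x : ℝ, x = D / z_m * P_h + ρ_m * Cp / (Q_M - Q_m) + l * Cp := ⟨_, rfl⟩
  obtain ⟨CP, hCPdef⟩ : ∃ x : ℝ, x = max KP (c2 / (D / z_m)) := ⟨_, rfl⟩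
  have hCB0 : 0 < CB := by rw [hCBdef]; exact lt_of_lt_of_le hKBpos (le_max_left _ _)
  have hCp0 : 0 < Cp := by rw [hCpdef]; exact lt_of_lt_of_le hKppos (le_max_left _ _)
  have hCP0 : 0 < CP := by rw [hCPdef]; exact lt_of_lt_of_le hKPpos (le_max_left _ _)
  have key : ∀ T, 0 < T → ∀ t ∈ Icc (0:ℝ) T, ∀ x ∈ Icc (0:ℝ) L,
      B x t ≤ CB ∧ p x t ≤ Cp ∧ P x t ≤ CP := by
    intro T hT
    obtain ⟨hregB, hregp, hregP, hpos, heqB, heqp, heqP, hneu⟩ := hsol T hT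
    have hBb : ∀ x ∈ Icc (0:ℝ) L, ∀ t ∈ Icc (0:ℝ) T, B x t ≤ CB := by
      have hmp := max_principle_s8 L T α (l + D / z_m) c0 hL hT hlam1 hα B hregB
        (by
          intro x hx t ht hpx0
          have htIcc : t ∈ Icc (0:ℝ) T := ⟨ht.1.le, ht.2⟩
          obtain ⟨hBp, hpp, hPp⟩ := hpos x hx t htIcc
          have hR := reactB_bound r Q_m z_m k K_bg H I_in hr hQm hzm hk hKbg hH hIin
            (B x t) (p x t) hBp hpp
          rw [heqB x hx t ht, hpx0]
          linarith [hc0def.le, hc0def.ge])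
        (fun t ht => ⟨(hneu t ht).1, (hneu t ht).2.1⟩) KB hKB
      intro x hx t ht
      rw [hCBdef]
      exact hmp x hx t ht
    have hpb : ∀ x ∈ Icc (0:ℝ) L, ∀ t ∈ Icc (0:ℝ) T, p x t ≤ Cp := by
      have hmp := max_principle_s8 L T α (l + D / z_m) c1 hL hT hlam1 hα p hregp
        (by
          intro x hx t ht hpx0
          have htIcc : t ∈ Icc (0:ℝ) T := ⟨ht.1.le, ht.2⟩
          obtain ⟨hBp, hpp, hPp⟩ := hpos x hx t htIcc
          have hR := eta_upper ρ_m Q_m Q_M M CB hρm hQM hM hdQ hCB0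
            (B x t) (p x t) (P x t) hpp hPp (hBb x hx t htIcc)
          rw [heqp x hx t ht, hpx0]
          linarith [hc1def.le, hc1def.ge])
        (fun t ht => ⟨(hneu t ht).2.2.1, (hneu t ht).2.2.2.1⟩) Kp hKp
      intro x hx t ht
      rw [hCpdef]
      exact hmp x hx t ht
    have hPb : ∀ x ∈ Icc (0:ℝ) L, ∀ t ∈ Icc (0:ℝ) T, P x t ≤ CP := by
      have hmp := max_principle_s8 L T β (D / z_m) c2 hL hT hlam2 hβ P hregP
        (by
          intro x hx t ht hpx0
          have htIcc : t ∈ Icc (0:ℝ) T := ⟨ht.1.le, ht.2⟩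
          obtain ⟨hBp, hpp, hPp⟩ := hpos x hx t htIcc
          have hR := eta_lower ρ_m Q_m Q_M M Cp hρm hQM hM hdQ
            (B x t) (p x t) (P x t) hBp hpp hPp (hpb x hx t htIcc)
          have hR2 : l * p x t ≤ l * Cp :=
            mul_le_mul_of_nonneg_left (hpb x hx t htIcc) hl.le
          rw [heqP x hx t ht, hpx0]
          linarith [hc2def.le, hc2def.ge])
        (fun t ht => ⟨(hneu t ht).2.2.2.2.1, (hneu t ht).2.2.2.2.2⟩) KP hKP
      intro x hx t ht
      rw [hCPdef]
      exact hmp x hx t ht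
    exact fun t ht x hx => ⟨hBb x hx t ht, hpb x hx t ht, hPb x hx t ht⟩
  refine ⟨CB + Cp + CP, by linarith, ?_⟩
  intro t ht
  have hk' := key (t + 1) (by linarith)
  have hmem0 : (0:ℝ) ∈ Icc (0:ℝ) L := ⟨le_rfl, hL.le⟩
  have htm : t ∈ Icc (0:ℝ) (t + 1) := ⟨ht, by linarith⟩
  have h1 : sSup ((fun x => B x t) '' Icc (0:ℝ) L) ≤ CB := by
    refine csSup_le ⟨B 0 t, mem_image_of_mem _ hmem0⟩ ?_
    rintro y ⟨x, hx, rfl⟩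
    exact (hk' t htm x hx).1
  have h2 : sSup ((fun x => p x t) '' Icc (0:ℝ) L) ≤ Cp := by
    refine csSup_le ⟨p 0 t, mem_image_of_mem _ hmem0⟩ ?_
    rintro y ⟨x, hx, rfl⟩
    exact (hk' t htm x hx).2.1
  have h3 : sSup ((fun x => P x t) '' Icc (0:ℝ) L) ≤ CP := by
    refine csSup_le ⟨P 0 t, mem_image_of_mem _ hmem0⟩ ?_
    rintro y ⟨x, hx, rfl⟩
    exact (hk' t htm x hx).2.2
  linarith
end

section
/- (Transformation from the (B,p,P)-system to the cell-quota system.) Let U ⊆ ℝ² be open and let B, p, P : ℝ × ℝ → ℝ be strictly positive on U, with B and p having continuous partial derivatives ∂_t, ∂_x, ∂_xx on U, and suppose that on U they satisfy ∂_t B = α·∂_xx B − β_B·v(t)·∂_x B + r·(1 − Q_m·B/p)·h(B)·B − l·B − (D/z_m)·B and ∂_t p = α·∂_xx p − β_B·v(t)·∂_x p + η(B,p,P) − l·p − (D/z_m)·p. Then the cell quota Q := p/B satisfies, at every point of U, ∂_t Q = α·∂_xx Q + (2α·(∂_x B)/B − β_B·v(t))·∂_x Q + ρ(Q,P) − r·(Q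 − Q_m)·h(B). -/
open Set

/-- Quota uptake function `ρ(Q,P) = ρ_m·((Q_M − Q)/(Q_M − Q_m))·(P/(P + M))`. -/
noncomputable def rhofun (ρ_m Q_m Q_M M : ℝ) (Q P : ℝ) : ℝ :=
  ρ_m * ((Q_M - Q) / (Q_M - Q_m)) * (P / (P + M))

/-- `f` has continuous partial derivatives `∂_t`, `∂_x`, `∂_xx` on the set `U`. -/
def ClassRegOn (U : Set (ℝ × ℝ)) (f : ℝ → ℝ → ℝ) : Prop :=
  ContinuousOn (fun q : ℝ × ℝ => f q.1 q.2) U ∧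
  (∀ q ∈ U,
    DifferentiableAt ℝ (fun τ => f q.1 τ) q.2 ∧
    DifferentiableAt ℝ (fun y => f y q.2) q.1 ∧
    DifferentiableAt ℝ (fun y => px f y q.2) q.1) ∧
  ContinuousOn (fun q : ℝ × ℝ => pt f q.1 q.2) U ∧
  ContinuousOn (fun q : ℝ × ℝ => px f q.1 q.2) U ∧
  ContinuousOn (fun q : ℝ × ℝ => pxx f q.1 q.2) U

/-- Transformation to the cell-quota system: if `(B,p,P)` solves
the `B`- and `p`-equations on an open set `U` with `B, p, P > 0` there, then the
cell quota `Q = p/B` satisfies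
`∂_t Q = α·∂_xx Q + (2α·(∂_x B)/B − β_B·v(t))·∂_x Q + ρ(Q,P) − r·(Q − Q_m)·h(B)`
on `U`. -/
theorem cell_quota_equation
    (α β_B r Q_m Q_M z_m k K_bg H I_in l D ρ_m M : ℝ)
    (hα : 0 < α) (hβB : 0 < β_B) (hr : 0 < r)
    (hQm : 0 < Q_m) (hQM : 0 < Q_M) (hzm : 0 < z_m) (hk : 0 < k)
    (hKbg : 0 < K_bg) (hH : 0 < H) (hIin : 0 < I_in) (hl : 0 < l) (hD : 0 < D)
    (hρm : 0 < ρ_m) (hM : 0 < M) (hQmM : Q_m < Q_M)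
    (v : ℝ → ℝ) (hv : Continuous v)
    (U : Set (ℝ × ℝ)) (hU : IsOpen U)
    (B p P : ℝ → ℝ → ℝ)
    (hpos : ∀ q ∈ U, 0 < B q.1 q.2 ∧ 0 < p q.1 q.2 ∧ 0 < P q.1 q.2)
    (hregB : ClassRegOn U B) (hregp : ClassRegOn U p)
    (heqB : ∀ q ∈ U,
      pt B q.1 q.2 = α * pxx B q.1 q.2 - β_B * v q.2 * px B q.1 q.2
        + r * (1 - Q_m * B q.1 q.2 / p q.1 q.2)
            * hfun z_m k K_bg H I_in (B q.1 q.2) * B q.1 q.2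
        - l * B q.1 q.2 - (D / z_m) * B q.1 q.2)
    (heqp : ∀ q ∈ U,
      pt p q.1 q.2 = α * pxx p q.1 q.2 - β_B * v q.2 * px p q.1 q.2
        + etafun ρ_m Q_m Q_M M (B q.1 q.2) (p q.1 q.2) (P q.1 q.2)
        - l * p q.1 q.2 - (D / z_m) * p q.1 q.2) :
    ∀ q ∈ U,
      pt (fun x t => p x t / B x t) q.1 q.2 =
        α * pxx (fun x t => p x t / B x t) q.1 q.2
        + (2 * α * (px B q.1 q.2) / B q.1 q.2 - β_B * v q.2)
            * px (fun x t => p x t / B x t) q.1 q.2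
        + rhofun ρ_m Q_m Q_M M (p q.1 q.2 / B q.1 q.2) (P q.1 q.2)
        - r * (p q.1 q.2 / B q.1 q.2 - Q_m) * hfun z_m k K_bg H I_in (B q.1 q.2) := by
   
  intro q hq
  obtain ⟨hB0, hp0, hP0⟩ := hpos q hq
  obtain ⟨-, hBd, -, -, -⟩ := hregB
  obtain ⟨-, hpd, -, -, -⟩ := hregp
  obtain ⟨hBt, hBx, hBxx⟩ := hBd q hq
  obtain ⟨hpt', hpx, hpxx⟩ := hpd q hq
  have hBne : B q.1 q.2 ≠ 0 := ne_of_gt hB0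
  have hpne : p q.1 q.2 ≠ 0 := ne_of_gt hp0
  -- time derivative of Q
  have e1 : pt (fun x t => p x t / B x t) q.1 q.2
      = (pt p q.1 q.2 * B q.1 q.2 - p q.1 q.2 * pt B q.1 q.2) / (B q.1 q.2)^2 := by
    simp only [pt]
    exact deriv_div hpt' hBt hBne
  -- space derivative of Q at any point of U on the horizontal line
  have epx : ∀ y, (y, q.2) ∈ U → px (fun x t => p x t / B x t) y q.2
      = (px p y q.2 * B y q.2 - p y q.2 * px B y q.2) / (B y q.2)^2 := by
    intro y hy
    obtain ⟨hB0', -, -⟩ := hpos (y, q.2) hy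
    obtain ⟨-, hBx', -⟩ := hBd (y, q.2) hy
    obtain ⟨-, hpx', -⟩ := hpd (y, q.2) hy
    simp only [px]
    exact deriv_div hpx' hBx' (ne_of_gt hB0')
  have hnb : ∀ᶠ y in nhds q.1, (y, q.2) ∈ U := by
    have hop : IsOpen {y : ℝ | (y, q.2) ∈ U} :=
      hU.preimage (by continuity)
    exact hop.mem_nhds (by simpa using hq)
  -- second space derivative of Q
  have hnum : HasDerivAt
      (fun y => px p y q.2 * B y q.2 - p y q.2 * px B y q.2)
      (pxx p q.1 q.2 * B q.1 q.2 + px p q.1 q.2 * px B q.1 q.2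
        - (px p q.1 q.2 * px B q.1 q.2 + p q.1 q.2 * pxx B q.1 q.2)) q.1 := by
    have h1 : HasDerivAt (fun y => px p y q.2) (pxx p q.1 q.2) q.1 := hpxx.hasDerivAt
    have h2 : HasDerivAt (fun y => B y q.2) (px B q.1 q.2) q.1 := hBx.hasDerivAt
    have h3 : HasDerivAt (fun y => p y q.2) (px p q.1 q.2) q.1 := hpx.hasDerivAt
    have h4 : HasDerivAt (fun y => px B y q.2) (pxx B q.1 q.2) q.1 := hBxx.hasDerivAt
    exact (h1.mul h2).sub (h3.mul h4)
  have hden : HasDerivAt (fun y => (B y q.2)^2)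
      ((2:ℕ) * (B q.1 q.2)^1 * px B q.1 q.2) q.1 := hBx.hasDerivAt.pow 2
  have hquot := hnum.div hden (pow_ne_zero 2 hBne)
  have e2 : pxx (fun x t => p x t / B x t) q.1 q.2
      = ((pxx p q.1 q.2 * B q.1 q.2 + px p q.1 q.2 * px B q.1 q.2
          - (px p q.1 q.2 * px B q.1 q.2 + p q.1 q.2 * pxx B q.1 q.2)) * (B q.1 q.2)^2
        - (px p q.1 q.2 * B q.1 q.2 - p q.1 q.2 * px B q.1 q.2)
            * ((2:ℕ) * (B q.1 q.2)^1 * px B q.1 q.2))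
        / ((B q.1 q.2)^2)^2 := by
    have hev : (fun y => px (fun x t => p x t / B x t) y q.2)
        =ᶠ[nhds q.1]
        (fun y => (px p y q.2 * B y q.2 - p y q.2 * px B y q.2) / (B y q.2)^2) :=
      hnb.mono fun y hy => epx y hy
    simp only [pxx]
    rw [Filter.EventuallyEq.deriv_eq hev]
    exact hquot.deriv
  have e3 := epx q.1 (by simpa using hq)
  have hBt' := heqB q hq
  have hpt'' := heqp q hq
  rw [e1, e2, e3, hBt', hpt'']
  simp only [etafun, rhofun]
  have hQ : Q_M - Q_m ≠ 0 := ne_of_gt (sub_pos.mpr hQmM)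
  have hPM : P q.1 q.2 + M ≠ 0 := ne_of_gt (by linarith)
  push_cast
  field_simp
  ring
end

section
/- (Self-regulating dispersal of the cell quota, continuous derivation.) Let U ⊆ ℝ² be open, let d : ℝ → ℝ be continuously differentiable, and let B, p : ℝ × ℝ → ℝ have continuous partial derivatives ∂_t, ∂_x, ∂_xx on U with B strictly positive on U. Suppose that on U they satisfy ∂_t B = ∂_x( d(x)·∂_x B ) and ∂_t p = ∂_x( d(x)·∂_x p ). Then Q := p/B satisfies, at every point of U, B²·∂_t Q = ∂_x( d(x)·B²·∂_x Q ), equivalently ∂_t Q = ∂_x( d(x)·∂_x Q ) + (2·d(x)/B)·(∂_x B)·(∂_x Q). -/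
open Set

/-- Self-regulating dispersal of the cell quota, continuous
derivation: if `∂_t B = ∂_x(d(x)·∂_x B)` and `∂_t p = ∂_x(d(x)·∂_x p)` on an
open set `U` with `B > 0`, then `Q = p/B` satisfies
`B²·∂_t Q = ∂_x(d(x)·B²·∂_x Q)`, equivalently
`∂_t Q = ∂_x(d(x)·∂_x Q) + (2·d(x)/B)·(∂_x B)·(∂_x Q)`. -/
theorem cell_quota_self_regulating_dispersal
    (d : ℝ → ℝ) (hd : ContDiff ℝ 1 d)
    (U : Set (ℝ × ℝ)) (hU : IsOpen U)
    (B p : ℝ → ℝ → ℝ)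
    (hregB : ClassRegOn U B) (hregp : ClassRegOn U p)
    (hBpos : ∀ q ∈ U, 0 < B q.1 q.2)
    (heqB : ∀ q ∈ U,
      pt B q.1 q.2 = deriv (fun y => d y * px B y q.2) q.1)
    (heqp : ∀ q ∈ U,
      pt p q.1 q.2 = deriv (fun y => d y * px p y q.2) q.1) :
    ∀ q ∈ U,
      (B q.1 q.2) ^ 2 * pt (fun x t => p x t / B x t) q.1 q.2 =
        deriv (fun y => d y * (B y q.2) ^ 2 *
          px (fun x t => p x t / B x t) y q.2) q.1 ∧
      pt (fun x t => p x t / B x t) q.1 q.2 =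
        deriv (fun y => d y * px (fun x t => p x t / B x t) y q.2) q.1
        + (2 * d q.1 / B q.1 q.2) * px B q.1 q.2
            * px (fun x t => p x t / B x t) q.1 q.2 := by
  intro q hq
  obtain ⟨x, t⟩ := q
  simp only at hBpos heqB heqp ⊢
  have hBne : B x t ≠ 0 := (hBpos (x, t) hq).ne'
  have hd' : DifferentiableAt ℝ d x := (hd.differentiable one_ne_zero) x
  have hev : ∀ᶠ y in nhds x, (y, t) ∈ U := by
    have hopen : IsOpen {y : ℝ | (y, t) ∈ U} :=
      hU.preimage (Continuous.prodMk continuous_id continuous_const)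
    exact hopen.mem_nhds hq
  -- derivative data at the base point
  have hpB := (hregB.2.1 (x, t) hq).2.1
  have hpp := (hregp.2.1 (x, t) hq).2.1
  have hpxB := (hregB.2.1 (x, t) hq).2.2
  have hpxp := (hregp.2.1 (x, t) hq).2.2
  -- formula for px Q on U
  have key : ∀ y : ℝ, (y, t) ∈ U →
      px (fun x t => p x t / B x t) y t
        = (px p y t * B y t - p y t * px B y t) / (B y t) ^ 2 := by
    intro y hy
    have hp1 := (hregp.2.1 (y, t) hy).2.1
    have hB1 := (hregB.2.1 (y, t) hy).2.1
    have hBne1 : B y t ≠ 0 := (hBpos (y, t) hy).ne'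
    simpa [px] using deriv_fun_div hp1 hB1 hBne1
  -- formula for pt Q at the base point
  have hptQ : pt (fun x t => p x t / B x t) x t
      = (pt p x t * B x t - p x t * pt B x t) / (B x t) ^ 2 := by
    have hp1 := (hregp.2.1 (x, t) hq).1
    have hB1 := (hregB.2.1 (x, t) hq).1
    simpa [pt] using deriv_fun_div hp1 hB1 hBne
  -- differentiability of y ↦ px Q y t at x
  have hRdiff : DifferentiableAt ℝ
      (fun y => (px p y t * B y t - p y t * px B y t) / (B y t) ^ 2) x :=
    ((hpxp.mul hpB).sub (hpp.mul hpxB)).div (hpB.pow 2) (pow_ne_zero 2 hBne)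
  have hevEq : (fun y => px (fun x t => p x t / B x t) y t) =ᶠ[nhds x]
      (fun y => (px p y t * B y t - p y t * px B y t) / (B y t) ^ 2) :=
    hev.mono fun y hy => key y hy
  have hpxQ : DifferentiableAt ℝ (fun y => px (fun x t => p x t / B x t) y t) x :=
    hRdiff.congr_of_eventuallyEq hevEq
  -- F and G agree near x
  have hFG : (fun y => d y * (B y t) ^ 2 * px (fun x t => p x t / B x t) y t)
      =ᶠ[nhds x]
      (fun y => B y t * (d y * px p y t) - p y t * (d y * px B y t)) := by
    filter_upwards [hev] with y hy
    have hBne1 : B y t ≠ 0 := (hBpos (y, t) hy).ne'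
    rw [key y hy]
    field_simp
  have hdxp : DifferentiableAt ℝ (fun y => d y * px p y t) x := hd'.mul hpxp
  have hdxB : DifferentiableAt ℝ (fun y => d y * px B y t) x := hd'.mul hpxB
  have hpxBdef : deriv (fun y => B y t) x = px B x t := rfl
  have hpxpdef : deriv (fun y => p y t) x = px p x t := rfl
  have hderivG : deriv
      (fun y => B y t * (d y * px p y t) - p y t * (d y * px B y t)) x
      = px B x t * (d x * px p x t) + B x t * pt p x t
        - (px p x t * (d x * px B x t) + p x t * pt B x t) := by
    rw [deriv_fun_sub (hpB.fun_mul hdxp) (hpp.fun_mul hdxB), deriv_fun_mul hpB hdxp,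
        deriv_fun_mul hpp hdxB, ← heqp (x, t) hq, ← heqB (x, t) hq,
        hpxBdef, hpxpdef]
  have part1 : (B x t) ^ 2 * pt (fun x t => p x t / B x t) x t
      = deriv (fun y => d y * (B y t) ^ 2 *
          px (fun x t => p x t / B x t) y t) x := by
    rw [hFG.deriv_eq, hderivG, hptQ]
    field_simp
    ring
  refine ⟨part1, ?_⟩
  have hdQ : DifferentiableAt ℝ
      (fun y => d y * px (fun x t => p x t / B x t) y t) x := hd'.mul hpxQ
  have hFH : (fun y => d y * (B y t) ^ 2 * px (fun x t => p x t / B x t) y t)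
      = (fun y => (B y t * B y t) *
          (d y * px (fun x t => p x t / B x t) y t)) := by
    funext y; ring
  have hderivH : deriv (fun y => d y * (B y t) ^ 2 *
        px (fun x t => p x t / B x t) y t) x
      = (px B x t * B x t + B x t * px B x t) *
          (d x * px (fun x t => p x t / B x t) x t)
        + (B x t * B x t) *
          deriv (fun y => d y * px (fun x t => p x t / B x t) y t) x := by
    rw [hFH, deriv_fun_mul (hpB.fun_mul hpB) hdQ, deriv_fun_mul hpB hpB, hpxBdef]
  have h := part1.trans hderivH
  set D := deriv (fun y => d y * px (fun x t => p x t / B x t) y t) x with hD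
  set QT := pt (fun x t => p x t / B x t) x t with hQT
  set QX := px (fun x t => p x t / B x t) x t with hQX
  refine mul_left_cancel₀ (pow_ne_zero 2 hBne) ?_
  rw [h]
  field_simp
  ring
end
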